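/- arXiv:2602.02432 — 2 statements merged into one kernel-verified Lean document; each statement's English description precedes it below -/
import Mathlib

section
/- Let X and U be topological spaces, f : Y → ℝ continuous, g : X × U → Y continuous, μ a probability measure on U, and c ∈ ℝ. Suppose for every x ∈ X that μ({u : f(g(x,u)) = c}) = 0. Then the function x ↦ μ({u : f(g(x,u)) ≥ c}) is continuous on X. -/
/-!
For `μ`-almost every `u` the value `f (g (x, u))` misses the threshold `c`, so the indicator of
`{u | c ≤ f (g (x', u))}` is eventually constant as `x' → x`. Dominated convergence along the
countably generated filter `𝓝 x` then gives convergence of the measures.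
-/

open MeasureTheory Filter Topology

theorem Filter.Tendsto.eventually_const_le_iff {ι β : Type*} [LinearOrder β] [TopologicalSpace β]
    [OrderClosedTopology β] {l : Filter ι} {F : ι → β} {a c : β} (hF : Tendsto F l (𝓝 a))
    (ha : a ≠ c) : ∀ᶠ i in l, c ≤ F i ↔ c ≤ a := by
  rcases ha.lt_or_gt with hac | hca
  · filter_upwards [hF.eventually_lt_const hac] with i hi
    exact iff_of_false hi.not_ge hac.not_ge
  · filter_upwards [hF.eventually_const_lt hca] with i hi
    exact iff_of_true hi.le hca.le

theorem continuous_measure_setOf_const_le {X U β : Type*} [TopologicalSpace X]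
    [FirstCountableTopology X] [TopologicalSpace U] [MeasurableSpace U] [OpensMeasurableSpace U]
    [LinearOrder β] [TopologicalSpace β] [OrderClosedTopology β]
    {μ : Measure U} [IsFiniteMeasure μ] {F : X → U → β} (hF : Continuous (Function.uncurry F))
    {c : β} (hnull : ∀ x, μ {u | F x u = c} = 0) :
    Continuous fun x => μ {u | c ≤ F x u} := by
  have hmeas (x : X) : MeasurableSet {u | c ≤ F x u} :=
    (isClosed_le continuous_const (hF.uncurry_left x)).measurableSet
  refine continuous_iff_continuousAt.2 fun x => ?_
  refine tendsto_measure_of_ae_tendsto_indicator_of_isFiniteMeasure (𝓝 x) (hmeas x) hmeas ?_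
  filter_upwards [measure_eq_zero_iff_ae_notMem.1 (hnull x)] with u hu
  exact ((hF.uncurry_right u).tendsto x).eventually_const_le_iff hu

/-- If `f` and `g` are continuous and `μ` places no mass on the limit state surface
`{u | f (g (x, u)) = c}` for each `x`, then the failure probability
`x ↦ μ {u | f (g (x, u)) ≥ c}` is continuous. -/
theorem failure_probability_continuous
    {X U Y : Type*} [MetricSpace X] [TopologicalSpace U] [MeasurableSpace U]
    [OpensMeasurableSpace U] [TopologicalSpace Y]
    (μ : Measure U) [IsProbabilityMeasure μ]
    (f : Y → ℝ) (hf : Continuous f)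
    (g : X × U → Y) (hg : Continuous g)
    (c : ℝ)
    (hnull : ∀ x : X, μ {u : U | f (g (x, u)) = c} = 0) :
    Continuous fun x : X => (μ {u : U | c ≤ f (g (x, u))}).toReal :=
  ENNReal.continuousOn_toReal.comp_continuous
    (continuous_measure_setOf_const_le (F := fun x u => f (g (x, u))) (hf.comp hg) hnull)
    fun _ => measure_ne_top μ _
end

section
/- Let X be a metric space, U a measurable space with probability measure μ, Y_feas ⊆ Y a subset of a topological space Y, g : X × U → Y continuous, f : Y → ℝ continuous, and c ∈ ℝ. Suppose for every x ∈ X that μ({u : f(g(x,u)) = c}) = 0 and μ({u : g(x,u) ∈ ∂Y_feas}) = 0, where ∂Y_feas denotes the topological boundary. Then P(x) = μ({u : f(g(x,u)) ≥ c or g(x,u) ∉ Y_feas}) is continuous in x. If moreover X is compact and nonempty, P attains its minimum at some x* ∈ X. -/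
/-!
Off the frontier of a set `E ⊆ X × U` membership in `E` is locally constant, so if almost every
point of each slice avoids the frontier, the indicators of the slices `{u | (x, u) ∈ E}` converge
almost everywhere as `x → x₀`, and dominated convergence makes `x ↦ μ {u | (x, u) ∈ E}`
continuous. The failure set has frontier inside `{f ∘ g = c} ∪ g⁻¹' ∂Y_feas`, which is null in
every slice by assumption. Slices of `E` itself need not be measurable (`Y_feas` is arbitrary),
so the convergence is run on the closed slices of `closure E`, which agree with them a.e.
-/

open MeasureTheory Filter Topology Set

theorem eventually_mem_iff_of_notMem_frontier {α : Type*} [TopologicalSpace α] {s : Set α}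
    {a : α} (ha : a ∉ frontier s) : ∀ᶠ b in 𝓝 a, (b ∈ s ↔ a ∈ s) := by
  by_cases has : a ∈ s
  · have : a ∈ interior s := (mem_interior_iff_notMem_frontier has).2 ha
    filter_upwards [mem_interior_iff_mem_nhds.1 this] with b hb
    exact iff_of_true hb has
  · have : a ∉ closure s := fun h => ha ⟨h, fun h' => has (interior_subset h')⟩
    filter_upwards [isClosed_closure.isOpen_compl.mem_nhds this] with b hb
    exact iff_of_false (fun h => hb (subset_closure h)) has

theorem frontier_setOf_le_or_notMem_subset {Z Y α : Type*} [TopologicalSpace Z]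
    [TopologicalSpace Y] [TopologicalSpace α] [LinearOrder α] [OrderClosedTopology α]
    {φ : Z → α} (hφ : Continuous φ) {g : Z → Y} (hg : Continuous g) (c : α) (S : Set Y) :
    frontier {z | c ≤ φ z ∨ g z ∉ S} ⊆ {z | φ z = c} ∪ g ⁻¹' frontier S := by
  have hle : frontier {z | c ≤ φ z} ⊆ {z | φ z = c} := fun z hz =>
    (frontier_le_subset_eq continuous_const hφ hz).symm
  have hS : frontier (g ⁻¹' Sᶜ) ⊆ g ⁻¹' frontier S := by
    simpa only [frontier_compl] using hg.frontier_preimage_subset Sᶜ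
  calc frontier {z | c ≤ φ z ∨ g z ∉ S}
      = frontier ({z | c ≤ φ z} ∪ g ⁻¹' Sᶜ) := rfl
    _ ⊆ frontier {z | c ≤ φ z} ∪ frontier (g ⁻¹' Sᶜ) :=
        (frontier_union_subset _ _).trans (union_subset_union inter_subset_left inter_subset_right)
    _ ⊆ {z | φ z = c} ∪ g ⁻¹' frontier S := union_subset_union hle hS

section Slices

variable {X U : Type*} [TopologicalSpace X] [TopologicalSpace U] [MeasurableSpace U]
  {μ : Measure U} {E : Set (X × U)}

theorem measure_slice_eq_measure_slice_closure {x : X} (hE : ∀ᵐ u ∂μ, (x, u) ∉ frontier E) :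
    μ {u | (x, u) ∈ E} = μ {u | (x, u) ∈ closure E} := by
  refine measure_congr (eventuallyEq_set.2 ?_)
  filter_upwards [hE] with u hu
  rw [closure_eq_self_union_frontier]
  exact (or_iff_left hu).symm

theorem continuous_measureReal_slice_of_ae_notMem_frontier [FirstCountableTopology X]
    [OpensMeasurableSpace U] [IsFiniteMeasure μ] (hE : ∀ x, ∀ᵐ u ∂μ, (x, u) ∉ frontier E) :
    Continuous fun x => μ.real {u | (x, u) ∈ E} := by
  simp only [measureReal_def, measure_slice_eq_measure_slice_closure (hE _)]
  refine continuous_iff_continuousAt.2 fun x₀ => ?_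
  have hmeas : ∀ x, MeasurableSet {u | (x, u) ∈ closure E} := fun x =>
    (isClosed_closure.preimage (Continuous.prodMk_right x)).measurableSet
  have hlim : ∀ᵐ u ∂μ, ∀ᶠ x in 𝓝 x₀, ((x, u) ∈ closure E ↔ (x₀, u) ∈ closure E) := by
    filter_upwards [hE x₀] with u hu
    exact ((Continuous.prodMk_left u).tendsto x₀).eventually
      (eventually_mem_iff_of_notMem_frontier fun h => hu (frontier_closure_subset h))
  exact (ENNReal.tendsto_toReal (measure_ne_top _ _)).comp
    (tendsto_measure_of_ae_tendsto_indicator_of_isFiniteMeasure _ (hmeas x₀) hmeas hlim)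

end Slices

/-- Continuity of the failure probability `P(x) = μ {u | f(g(x,u)) ≥ c or g(x,u) ∉ Y_feas}`,
and attainment of its minimum when `X` is compact and nonempty. -/
theorem failure_probability_continuous_and_min_attained
    {X U Y : Type*} [MetricSpace X] [TopologicalSpace U] [MeasurableSpace U]
    [OpensMeasurableSpace U] [TopologicalSpace Y]
    (μ : Measure U) [IsProbabilityMeasure μ]
    (Yfeas : Set Y)
    (g : X × U → Y) (hg : Continuous g)
    (f : Y → ℝ) (hf : Continuous f)
    (c : ℝ)
    (hnull₁ : ∀ x : X, μ {u : U | f (g (x, u)) = c} = 0)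
    (hnull₂ : ∀ x : X, μ {u : U | g (x, u) ∈ frontier Yfeas} = 0) :
    Continuous (fun x : X =>
        (μ {u : U | c ≤ f (g (x, u)) ∨ g (x, u) ∉ Yfeas}).toReal) ∧
      (CompactSpace X → Nonempty X →
        ∃ xstar : X, ∀ x : X,
          (μ {u : U | c ≤ f (g (xstar, u)) ∨ g (xstar, u) ∉ Yfeas}).toReal ≤
            (μ {u : U | c ≤ f (g (x, u)) ∨ g (x, u) ∉ Yfeas}).toReal) := by
  have hE : ∀ x, ∀ᵐ u ∂μ, (x, u) ∉ frontier {p : X × U | c ≤ f (g p) ∨ g p ∉ Yfeas} :=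
    fun x => ae_iff.2 <| measure_mono_null
      (fun u hu => frontier_setOf_le_or_notMem_subset (hf.comp hg) hg c Yfeas (not_not.1 hu))
      (measure_union_null (hnull₁ x) (hnull₂ x))
  have hP := continuous_measureReal_slice_of_ae_notMem_frontier hE
  refine ⟨hP, fun _ _ => ?_⟩
  obtain ⟨xstar, -, hmin⟩ := isCompact_univ.exists_isMinOn univ_nonempty hP.continuousOn
  exact ⟨xstar, fun x => hmin (mem_univ x)⟩
end
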